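/- arXiv:2002.00208 — 4 statements merged into one kernel-verified Lean document; each statement's English description precedes it below -/
import Mathlib

section
/- Let X, Y : ℤ → ℝ be time series, let δ ≥ 1 be a maximum lag, and let Δ ≥ 1 be an integer. Suppose the delay sequence is constant, i.e. Δ_t = Δ for all t ∈ ℤ. Then the variable-lag regression model coincides with a fixed-lag regression model: (i) for all coefficients a, b, c : {1,…,δ} → ℝ there exist coefficients a′, b′ : {1,…,δ+Δ−1} → ℝ such that for every t ∈ ℤ, Y(t) − Σ_{i=1}^{δ} (a_i Y(t−i) + b_i X(t−i) + c_i X(t−i+1−Δ)) = Y(t) − Σ_{j=1}^{δ+Δ−1} (a′_j Y(t−j) + b′_j X(t−j)); and conversely (ii) for all coefficients a′, b′ : {1,…,δ} → ℝ there exist coefficients a, b, c : {1,…,δ} → ℝ such that for every t ∈ ℤ the variable-lag residual Y(t) − Σ_{i=1}^{δ} (a_i Y(t−i) + b_i X(t−i) + c_i X(t−i+1−Δ)) equals the fixed-lag residual Y(t) − Σ_{i=1}^{δ} (a′_i Y(t−i) + b′_i X(t−i)). (Proposition: if all delays are constant, then r*_{YX}(t) = r_{YX}(t).) -/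
lemma sum_int_icc_eq_nat (f : ℤ → ℝ) (n : ℕ) :
    ∑ j ∈ Finset.Icc (1:ℤ) (n:ℤ), f j = ∑ i ∈ Finset.Icc 1 n, f i := by
  apply Finset.sum_nbij' (i := fun j : ℤ => j.toNat) (j := fun i : ℕ => (i : ℤ))
  · intro a ha; simp at ha ⊢; omega
  · intro a ha; simp at ha ⊢; omega
  · intro a ha; simp at ha ⊢; omega
  · intro a ha; simp
  · intro a ha; simp at ha; congr 1; omega

lemma sum_int_icc_shift (g : ℤ → ℝ) (n : ℕ) (Δ : ℤ) :
    ∑ j ∈ Finset.Icc Δ ((n:ℤ) + Δ - 1), g j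
      = ∑ i ∈ Finset.Icc 1 n, g ((i:ℤ) + Δ - 1) := by
  apply Finset.sum_nbij' (i := fun j : ℤ => (j - Δ + 1).toNat)
    (j := fun i : ℕ => (i : ℤ) + Δ - 1)
  · intro a ha; simp at ha ⊢; omega
  · intro a ha; simp at ha ⊢; omega
  · intro a ha; simp at ha ⊢; omega
  · intro a ha; simp at ha ⊢; omega
  · intro a ha; simp at ha; congr 1; omega

lemma ite_sum_restrict (f : ℤ → ℝ) (s t : Finset ℤ) (hst : s ⊆ t)
    (P : ℤ → Prop) [DecidablePred P] (hP : ∀ j ∈ t, P j ↔ j ∈ s) :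
    ∑ j ∈ t, (if P j then f j else 0) = ∑ j ∈ s, f j := by
  rw [← Finset.sum_subset hst (fun x hx hx' => by
    simp [(hP x hx).not.mpr hx'] )]
  exact Finset.sum_congr rfl fun x hx => by simp [(hP x (hst hx)).mpr hx]

/-- **Proposition (constant delays).** If the delay sequence is constant, equal to `Δ ≥ 1`,
then the variable-lag regression model coincides with a fixed-lag regression model. -/
theorem variable_lag_eq_fixed_lag_of_constant_delay
    (X Y : ℤ → ℝ) (δ : ℕ) (hδ : 1 ≤ δ) (Δ : ℤ) (hΔ : 1 ≤ Δ) :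
    -- (i) every variable-lag model (with constant delay Δ) is a fixed-lag model
    --     with maximum lag δ + Δ - 1
    (∀ a b c : ℕ → ℝ, ∃ a' b' : ℤ → ℝ, ∀ t : ℤ,
      Y t - ∑ i ∈ Finset.Icc 1 δ,
        (a i * Y (t - i) + b i * X (t - i) + c i * X (t - i + 1 - Δ))
      = Y t - ∑ j ∈ Finset.Icc (1 : ℤ) ((δ : ℤ) + Δ - 1),
        (a' j * Y (t - j) + b' j * X (t - j))) ∧
    -- (ii) every fixed-lag model with maximum lag δ is a variable-lag model
    (∀ a' b' : ℕ → ℝ, ∃ a b c : ℕ → ℝ, ∀ t : ℤ,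
      Y t - ∑ i ∈ Finset.Icc 1 δ,
        (a i * Y (t - i) + b i * X (t - i) + c i * X (t - i + 1 - Δ))
      = Y t - ∑ i ∈ Finset.Icc 1 δ,
        (a' i * Y (t - i) + b' i * X (t - i))) := by
  constructor
  · intro a b c
    refine ⟨fun j => if j ≤ (δ:ℤ) then a j.toNat else 0,
      fun j => (if j ≤ (δ:ℤ) then b j.toNat else 0)
        + (if Δ ≤ j then c (j - Δ + 1).toNat else 0), fun t => ?_⟩
    congr 1
    have hsub1 : Finset.Icc (1:ℤ) (δ:ℤ) ⊆ Finset.Icc (1:ℤ) ((δ:ℤ) + Δ - 1) := by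
      apply Finset.Icc_subset_Icc_right; omega
    have hsub2 : Finset.Icc Δ ((δ:ℤ) + Δ - 1) ⊆ Finset.Icc (1:ℤ) ((δ:ℤ) + Δ - 1) := by
      apply Finset.Icc_subset_Icc_left; omega
    have e1 : ∑ j ∈ Finset.Icc (1:ℤ) ((δ:ℤ) + Δ - 1),
        (if j ≤ (δ:ℤ) then a j.toNat * Y (t - j) else 0)
        = ∑ i ∈ Finset.Icc 1 δ, a i * Y (t - i) := by
      rw [ite_sum_restrict _ _ _ hsub1 _ (by intro j hj; simp at hj ⊢; omega)]
      rw [sum_int_icc_eq_nat (fun j => a j.toNat * Y (t - j)) δ]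
      exact Finset.sum_congr rfl fun i _ => by simp
    have e2 : ∑ j ∈ Finset.Icc (1:ℤ) ((δ:ℤ) + Δ - 1),
        (if j ≤ (δ:ℤ) then b j.toNat * X (t - j) else 0)
        = ∑ i ∈ Finset.Icc 1 δ, b i * X (t - i) := by
      rw [ite_sum_restrict _ _ _ hsub1 _ (by intro j hj; simp at hj ⊢; omega)]
      rw [sum_int_icc_eq_nat (fun j => b j.toNat * X (t - j)) δ]
      exact Finset.sum_congr rfl fun i _ => by simp
    have e3 : ∑ j ∈ Finset.Icc (1:ℤ) ((δ:ℤ) + Δ - 1),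
        (if Δ ≤ j then c (j - Δ + 1).toNat * X (t - j) else 0)
        = ∑ i ∈ Finset.Icc 1 δ, c i * X (t - i + 1 - Δ) := by
      rw [ite_sum_restrict _ _ _ hsub2 _ (by intro j hj; simp at hj ⊢; omega)]
      rw [sum_int_icc_shift (fun j => c (j - Δ + 1).toNat * X (t - j)) δ Δ]
      refine Finset.sum_congr rfl fun i hi => ?_
      have h1 : ((i:ℤ) + Δ - 1 - Δ + 1).toNat = i := by omega
      have h2 : t - ((i:ℤ) + Δ - 1) = t - i + 1 - Δ := by ring
      rw [h1, h2]
    calc ∑ i ∈ Finset.Icc 1 δ,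
          (a i * Y (t - i) + b i * X (t - i) + c i * X (t - i + 1 - Δ))
        = (∑ i ∈ Finset.Icc 1 δ, a i * Y (t - i))
          + (∑ i ∈ Finset.Icc 1 δ, b i * X (t - i))
          + (∑ i ∈ Finset.Icc 1 δ, c i * X (t - i + 1 - Δ)) := by
          rw [Finset.sum_add_distrib, Finset.sum_add_distrib]
      _ = _ := by
          rw [← e1, ← e2, ← e3, ← Finset.sum_add_distrib, ← Finset.sum_add_distrib]
          refine Finset.sum_congr rfl fun j _ => ?_
          by_cases h1 : j ≤ (δ:ℤ) <;> by_cases h2 : Δ ≤ j <;>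
            simp [h1, h2] <;> ring
  · intro a' b'
    exact ⟨a', b', fun _ => 0, fun t => by simp⟩
end

section
/- Let X, Y : ℤ → ℝ be time series and Δ : ℤ → ℤ a delay sequence such that Y(t) = X(t − Δ_t) for all t ∈ ℤ, and let δ ≥ 1 be a maximum lag. Then the variable-lag regression achieves a perfect fit: taking a_i = 0 and b_i = 0 for all i, c_1 = 1 and c_i = 0 for i ≥ 2, the variable-lag residual r*_{YX}(t) = Y(t) − Σ_{i=1}^{δ} (a_i Y(t−i) + b_i X(t−i) + c_i X(t−i+1−Δ_{t−i+1})) equals 0 for every t ∈ ℤ. Consequently, for every finite set F ⊆ ℤ of time points, the infimum over all coefficient vectors (a, b, c) of the sum of squared variable-lag residuals Σ_{t∈F} r*_{YX}(t)² equals 0. -/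
/-- **Proposition (perfect variable-lag fit).** If `Y(t) = X(t - Δ_t)` for all `t`,
then taking `a = b = 0`, `c₁ = 1`, `cᵢ = 0` for `i ≥ 2`, the variable-lag residual is
identically zero; consequently, on every finite set of time points, the infimum of the
sum of squared variable-lag residuals over all coefficient vectors is `0`. -/
theorem variable_lag_residual_perfect_fit
    (X Y : ℤ → ℝ) (Δ : ℤ → ℤ) (hXY : ∀ t : ℤ, Y t = X (t - Δ t))
    (δ : ℕ) (hδ : 1 ≤ δ) :
    (∀ t : ℤ,
      Y t - ∑ i ∈ Finset.Icc 1 δ,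
        ((0 : ℝ) * Y (t - i) + (0 : ℝ) * X (t - i) +
          (if i = 1 then (1 : ℝ) else 0) * X (t - i + 1 - Δ (t - i + 1))) = 0) ∧
    (∀ F : Finset ℤ,
      sInf {s : ℝ | ∃ a b c : ℕ → ℝ,
        s = ∑ t ∈ F,
          (Y t - ∑ i ∈ Finset.Icc 1 δ,
            (a i * Y (t - i) + b i * X (t - i) +
              c i * X (t - i + 1 - Δ (t - i + 1)))) ^ 2} = 0) := by
  have key : ∀ t : ℤ,
      Y t - ∑ i ∈ Finset.Icc 1 δ,
        ((0 : ℝ) * Y (t - i) + (0 : ℝ) * X (t - i) +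
          (if i = 1 then (1 : ℝ) else 0) * X (t - i + 1 - Δ (t - i + 1))) = 0 := by
    intro t
    have h1 : (1 : ℕ) ∈ Finset.Icc 1 δ := Finset.mem_Icc.mpr ⟨le_refl 1, hδ⟩
    have hsum : ∑ i ∈ Finset.Icc 1 δ,
        ((0 : ℝ) * Y (t - i) + (0 : ℝ) * X (t - i) +
          (if i = 1 then (1 : ℝ) else 0) * X (t - i + 1 - Δ (t - i + 1)))
        = X (t - 1 + 1 - Δ (t - 1 + 1)) := by
      rw [Finset.sum_eq_single 1]
      · simp
      · intro i _ hi
        simp [hi]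
      · intro h; exact absurd h1 h
    rw [hsum]
    have : t - 1 + 1 = t := by ring
    rw [this, hXY t, sub_self]
  refine ⟨key, fun F => ?_⟩
  have hmem : (0 : ℝ) ∈ {s : ℝ | ∃ a b c : ℕ → ℝ,
      s = ∑ t ∈ F,
        (Y t - ∑ i ∈ Finset.Icc 1 δ,
          (a i * Y (t - i) + b i * X (t - i) +
            c i * X (t - i + 1 - Δ (t - i + 1)))) ^ 2} := by
    refine ⟨fun _ => 0, fun _ => 0, fun i => if i = 1 then 1 else 0, ?_⟩
    symm
    apply Finset.sum_eq_zero
    intro t _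
    rw [key t]
    simp
  have hbdd : ∀ s ∈ {s : ℝ | ∃ a b c : ℕ → ℝ,
      s = ∑ t ∈ F,
        (Y t - ∑ i ∈ Finset.Icc 1 δ,
          (a i * Y (t - i) + b i * X (t - i) +
            c i * X (t - i + 1 - Δ (t - i + 1)))) ^ 2}, (0 : ℝ) ≤ s := by
    rintro s ⟨a, b, c, rfl⟩
    exact Finset.sum_nonneg fun t _ => sq_nonneg _
  exact le_antisymm (csInf_le ⟨0, hbdd⟩ hmem) (le_csInf ⟨0, hmem⟩ hbdd)
end

section
/- Let X, Y : ℤ → ℝ be time series and Δ : ℤ → ℤ a delay sequence such that Y(t) = X(t − Δ_t) for all t ∈ ℤ. Suppose X(s) ≠ X(s−1) for every s ∈ ℤ, and suppose there exists t₀ ∈ ℤ with Δ_{t₀+1} = Δ_{t₀} + 1. Then: (i) the variable-lag shift fits Y perfectly, i.e. Y(t) − X(t − Δ_t) = 0 for all t ∈ ℤ; and (ii) every fixed-lag shift has strictly positive residual sum of squares on {t₀, t₀+1}, i.e. for every δ ∈ ℤ, (Y(t₀) − X(t₀−δ))² + (Y(t₀+1) − X(t₀+1−δ))² > 0. (Proposition: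 under these hypotheses the variable-lag regression residual has strictly smaller variance than the fixed-lag regression residual, VAR(r*_{YX}) < VAR(r_{YX}).) -/
/-- **Proposition (variable lag beats every fixed lag).** Suppose `Y(t) = X(t - Δ_t)` for all
`t`, `X` never repeats consecutive values, and the delay increases by one at some time `t₀`.
Then (i) the variable-lag shift fits `Y` perfectly, and (ii) every fixed-lag shift has
strictly positive residual sum of squares on `{t₀, t₀+1}`. -/
theorem variable_lag_fits_and_fixed_lag_positive_residual
    (X Y : ℤ → ℝ) (Δ : ℤ → ℤ) (hXY : ∀ t : ℤ, Y t = X (t - Δ t))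
    (hX : ∀ s : ℤ, X s ≠ X (s - 1))
    (t₀ : ℤ) (hΔ : Δ (t₀ + 1) = Δ t₀ + 1) :
    (∀ t : ℤ, Y t - X (t - Δ t) = 0) ∧
    (∀ δ : ℤ,
      (Y t₀ - X (t₀ - δ)) ^ 2 + (Y (t₀ + 1) - X (t₀ + 1 - δ)) ^ 2 > 0) := by
  refine ⟨fun t => by rw [hXY]; ring, fun δ => ?_⟩
  by_contra h
  push_neg at h
  have h1 : (Y t₀ - X (t₀ - δ)) ^ 2 ≥ 0 := sq_nonneg _
  have h2 : (Y (t₀ + 1) - X (t₀ + 1 - δ)) ^ 2 ≥ 0 := sq_nonneg _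
  have e1 : Y t₀ = X (t₀ - δ) := by nlinarith
  have e2 : Y (t₀ + 1) = X (t₀ + 1 - δ) := by nlinarith
  have k1 := hXY t₀
  have k2 := hXY (t₀ + 1)
  rw [hΔ] at k2
  have : t₀ + 1 - (Δ t₀ + 1) = t₀ - Δ t₀ := by ring
  rw [this] at k2
  have : X (t₀ + 1 - δ) = X (t₀ + 1 - δ - 1) := by
    have : t₀ + 1 - δ - 1 = t₀ - δ := by ring
    rw [this, ← e2, ← e1, k1, k2]
  exact hX _ this
end

section
/- Let ε > 0, let t₀ ≤ t₂ ≤ t₁ be integers, and let 𝒳 and 𝒱 be nonempty finite families of time series ℤ → ℝ. Assume: (i) every X ∈ 𝒳 ε-converges toward agg(𝒳) on [t₀, t₁], i.e. |agg(𝒳)(t) − X(t)| ≤ ε for all X ∈ 𝒳 and all integers t with t₀ ≤ t ≤ t₁; and (ii) for every U ∈ 𝒱 there exists X ∈ 𝒳 such that |X(t) − U(t)| ≤ ε for all integers t with t₂ ≤ t ≤ t₁. Then for every integer t with t₂ ≤ t ≤ t₁, |agg(𝒳)(t) − agg(𝒱)(t)| ≤ 2ε. (This is the quantitative content of the proposition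 that the aggregate of a set of initiators forming an ε-convergence coordination set VL-Granger-causes the aggregate of the remaining time series.) -/
/-- The aggregate of a finite family of time series: the pointwise arithmetic mean. -/
noncomputable def agg (S : Finset (ℤ → ℝ)) (t : ℤ) : ℝ :=
  (∑ U ∈ S, U t) / S.card

/-- **Proposition (initiators cause the followers' aggregate).** If every member of the set of
initiators `𝒳` `ε`-converges toward `agg 𝒳` on `[t₀, t₁]`, and every follower in `𝒱` is
within `ε` of some initiator on `[t₂, t₁]`, then the aggregates `agg 𝒳` and `agg 𝒱` are
within `2ε` of each other on `[t₂, t₁]`. -/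
theorem agg_initiators_close_to_agg_followers
    (ε : ℝ) (hε : 0 < ε) (t₀ t₁ t₂ : ℤ) (h02 : t₀ ≤ t₂) (h21 : t₂ ≤ t₁)
    (𝒳 𝒱 : Finset (ℤ → ℝ)) (h𝒳 : 𝒳.Nonempty) (h𝒱 : 𝒱.Nonempty)
    (hconv : ∀ X ∈ 𝒳, ∀ t : ℤ, t₀ ≤ t → t ≤ t₁ → |agg 𝒳 t - X t| ≤ ε)
    (hfollow : ∀ U ∈ 𝒱, ∃ X ∈ 𝒳, ∀ t : ℤ, t₂ ≤ t → t ≤ t₁ → |X t - U t| ≤ ε) :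
    ∀ t : ℤ, t₂ ≤ t → t ≤ t₁ → |agg 𝒳 t - agg 𝒱 t| ≤ 2 * ε := by
  intro t ht2 ht1
  have hcard : (0:ℝ) < 𝒱.card := by exact_mod_cast Finset.card_pos.mpr h𝒱
  have key : ∀ U ∈ 𝒱, |agg 𝒳 t - U t| ≤ 2 * ε := by
    intro U hU
    obtain ⟨X, hX, hXU⟩ := hfollow U hU
    calc |agg 𝒳 t - U t| = |(agg 𝒳 t - X t) + (X t - U t)| := by ring_nf
      _ ≤ |agg 𝒳 t - X t| + |X t - U t| := abs_add_le _ _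
      _ ≤ ε + ε := add_le_add (hconv X hX t (h02.trans ht2) ht1) (hXU t ht2 ht1)
      _ = 2 * ε := by ring
  have h1 : (𝒱.card:ℝ) ≠ 0 := ne_of_gt hcard
  have : agg 𝒳 t - agg 𝒱 t = (∑ U ∈ 𝒱, (agg 𝒳 t - U t)) / 𝒱.card := by
    rw [eq_div_iff h1, sub_mul, Finset.sum_sub_distrib, Finset.sum_const, nsmul_eq_mul]
    have : agg 𝒱 t * 𝒱.card = ∑ U ∈ 𝒱, U t := by
      rw [agg, div_mul_cancel₀ _ h1]
    rw [this]; ring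
  rw [this, abs_div, abs_of_pos hcard, div_le_iff₀ hcard]
  calc |∑ U ∈ 𝒱, (agg 𝒳 t - U t)| ≤ ∑ U ∈ 𝒱, |agg 𝒳 t - U t| :=
        Finset.abs_sum_le_sum_abs _ _
    _ ≤ ∑ U ∈ 𝒱, 2 * ε := Finset.sum_le_sum key
    _ = 2 * ε * 𝒱.card := by rw [Finset.sum_const]; ring
end
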